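/- Assume (H3) and λ∘ ∈ Z_S, and for z ∈ Z_S set 𝕃_z := (Θ_S + M_z)^{-1} and R̂_z := R_z + 𝔾_z 𝕃_z 𝔾_{z̄}*. Then R̂ is a pseudo-resolvent, i.e. R̂_z − R̂_w = (w−z) R̂_z R̂_w for all z, w ∈ Z_S; moreover R̂_z* = R̂_{z̄} and ker(R̂_{λ∘}) = {0}. -/

import Mathlib

open scoped InnerProductSpace ComplexConjugate

noncomputable section

local notation "⟪" x ", " y "⟫" => @inner ℂ _ _ x y

/-- Abstract context for the paper "On the resolvent of H+A*+A":
`F` is the Hilbert space `𝔉`, `H1` is the space `𝔥₁ = dom(H)` endowed with the graph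
norm, `Hm1` is the dual space `𝔥₋₁`.  `j1 : 𝔥₁ ↪ 𝔉` and `jm : 𝔉 ↪ 𝔥₋₁` are the dense
inclusions, `Hop` is `H` viewed as a bounded operator `𝔥₁ → 𝔉`, `Hbar` is its closure
`H̄ : 𝔉 → 𝔥₋₁`, `lamInf = inf σ(H)`, `res = ρ(H)`, `RF z = (-H+z)⁻¹ : 𝔉 → 𝔥₁`,
`RM z` is its extension `𝔥₋₁ → 𝔉`, `pair` is the duality pairing between `𝔥₋₁` and `𝔥₁`
(conjugate-linear in the first variable) extending the scalar product of `𝔉`,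
`ns s` is the scale norm `‖ψ‖_s = ‖(H²+1)^{s/2}ψ‖` on `𝔥₁` (`0 ≤ s ≤ 1`),
`A ∈ 𝔅(𝔥₁,𝔉)` and `Astar : 𝔉 → 𝔥₋₁` is its dual-pairing adjoint. -/
structure Ctx (F H1 Hm1 : Type*)
    [NormedAddCommGroup F] [InnerProductSpace ℂ F] [CompleteSpace F]
    [NormedAddCommGroup H1] [InnerProductSpace ℂ H1] [CompleteSpace H1]
    [NormedAddCommGroup Hm1] [InnerProductSpace ℂ Hm1] [CompleteSpace Hm1] where
  j1 : H1 →L[ℂ] F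
  jm : F →L[ℂ] Hm1
  Hop : H1 →L[ℂ] F
  Hbar : F →L[ℂ] Hm1
  lamInf : ℝ
  res : Set ℂ
  RF : ℂ → (F →L[ℂ] H1)
  RM : ℂ → (Hm1 →L[ℂ] F)
  pair : Hm1 → H1 → ℂ
  ns : ℝ → H1 → ℝ
  A : H1 →L[ℂ] F
  Astar : F →L[ℂ] Hm1
  j1_inj : Function.Injective j1
  j1_dense : DenseRange j1
  jm_inj : Function.Injective jm
  jm_dense : DenseRange jm
  /-- the norm of `𝔥₁` is the graph norm of `H` -/
  norm1_sq : ∀ ψ : H1, ‖ψ‖ ^ 2 = ‖j1 ψ‖ ^ 2 + ‖Hop ψ‖ ^ 2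
  /-- `H` is symmetric -/
  Hsymm : ∀ ψ φ : H1, ⟪j1 ψ, Hop φ⟫ = ⟪Hop ψ, j1 φ⟫
  /-- `H` is self-adjoint: non-real points belong to `ρ(H)` -/
  res_nonreal : ∀ z : ℂ, z.im ≠ 0 → z ∈ res
  /-- `H` is bounded from below by `lamInf` -/
  res_below : ∀ x : ℝ, x < lamInf → (x : ℂ) ∈ res
  /-- `lamInf` is exactly `inf σ(H)` -/
  lamInf_not_res : (lamInf : ℂ) ∉ res
  RF_inv_left : ∀ z ∈ res, (RF z).comp (z • j1 - Hop) = ContinuousLinearMap.id ℂ H1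
  RF_inv_right : ∀ z ∈ res, (z • j1 - Hop).comp (RF z) = ContinuousLinearMap.id ℂ F
  /-- `H̄` extends `H` -/
  Hbar_ext : Hbar.comp j1 = jm.comp Hop
  /-- `RM z` extends `RF z` -/
  RM_ext : ∀ z ∈ res, (RM z).comp jm = j1.comp (RF z)
  RM_inv_left : ∀ z ∈ res, (RM z).comp (z • jm - Hbar) = ContinuousLinearMap.id ℂ F
  RM_inv_right : ∀ z ∈ res, (z • jm - Hbar).comp (RM z) = ContinuousLinearMap.id ℂ Hm1
  pair_add : ∀ x y φ, pair (x + y) φ = pair x φ + pair y φ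
  pair_smul : ∀ (a : ℂ) x φ, pair (a • x) φ = starRingEnd ℂ a * pair x φ
  pair_addr : ∀ x φ₁ φ₂, pair x (φ₁ + φ₂) = pair x φ₁ + pair x φ₂
  pair_smulr : ∀ (a : ℂ) x φ, pair x (a • φ) = a * pair x φ
  pair_cont : ∀ φ, Continuous fun x => pair x φ
  /-- the pairing extends the scalar product of `𝔉` -/
  pair_jm : ∀ (ψ : F) (φ : H1), pair (jm ψ) φ = ⟪ψ, j1 φ⟫
  pair_nondeg : ∀ x, (∀ φ, pair x φ = 0) → x = 0
  ns_zero : ∀ ψ, ns 0 ψ = ‖j1 ψ‖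
  ns_one : ∀ ψ, ns 1 ψ = ‖ψ‖
  ns_nonneg : ∀ s ψ, 0 ≤ ns s ψ
  ns_mono : ∀ s t : ℝ, 0 ≤ s → s ≤ t → t ≤ 1 → ∀ ψ, ns s ψ ≤ ns t ψ
  /-- interpolation property of the scale of Hilbert spaces -/
  ns_interp : ∀ s : ℝ, 0 ≤ s → s ≤ 1 → ∀ ψ, ns s ψ ≤ ‖ψ‖ ^ s * ‖j1 ψ‖ ^ (1 - s)
  /-- `Astar` is the dual-pairing adjoint of `A` -/
  Astar_spec : ∀ (ψ : F) (φ : H1), pair (Astar ψ) φ = ⟪ψ, A φ⟫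

variable {F H1 Hm1 : Type*}
  [NormedAddCommGroup F] [InnerProductSpace ℂ F] [CompleteSpace F]
  [NormedAddCommGroup H1] [InnerProductSpace ℂ H1] [CompleteSpace H1]
  [NormedAddCommGroup Hm1] [InnerProductSpace ℂ Hm1] [CompleteSpace Hm1]

namespace Ctx

variable (c : Ctx F H1 Hm1)

/-- `G_z := (A R_{z̄})* ∈ 𝔅(𝔉)`. -/
def G (z : ℂ) : F →L[ℂ] F :=
  ContinuousLinearMap.adjoint (c.A.comp (c.RF (starRingEnd ℂ z)))

/-- `G_z* ∈ 𝔅(𝔉)`, for `z` real this is `G*`. -/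
def Gst (lam : ℝ) : F →L[ℂ] F :=
  ContinuousLinearMap.adjoint (c.G (lam : ℂ))

/-- `𝔸 : 𝔥₁ → 𝔉⊕𝔥₁`, `𝔸ψ = Aψ ⊕ ψ`. -/
def Ab : H1 →L[ℂ] (F × H1) :=
  c.A.prod (ContinuousLinearMap.id ℂ H1)

/-- `𝔾_z : 𝔉⊕𝔥₋₁ → 𝔉`, `𝔾_z(ψ⊕φ) = G_zψ + R_zφ`. -/
def Gb (z : ℂ) : (F × Hm1) →L[ℂ] F :=
  (c.G z).comp (ContinuousLinearMap.fst ℂ F Hm1) +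
    (c.RM z).comp (ContinuousLinearMap.snd ℂ F Hm1)

/-- `𝔾_{z̄}* : 𝔉 → 𝔉⊕𝔥₁`, `ψ ↦ (A R_z ψ) ⊕ (R_z ψ)`. -/
def Gbstar (z : ℂ) : F →L[ℂ] (F × H1) :=
  (c.A.comp (c.RF z)).prod (c.RF z)

/-- `M_z = 𝔸(𝔾 - 𝔾_z) = (z-λ∘) 𝔾* 𝔾_z : 𝔉⊕𝔥₋₁ → 𝔉⊕𝔥₁`. -/
def M (lam : ℝ) (z : ℂ) : (F × Hm1) →L[ℂ] (F × H1) :=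
  (z - (lam : ℂ)) • ((c.Gbstar (lam : ℂ)).comp (c.Gb z))

/-- `M' : 𝔉⊕𝔥₋₁ → 𝔉⊕𝔥₁` is a realization of `M_z := 𝔸(𝔾 - 𝔾_z)`, i.e. the second
component of `M' x` is the lift to `𝔥₁` of `(𝔾 - 𝔾_z)x` and the first component is `A`
applied to it. -/
def IsMLift (lam : ℝ) (z : ℂ) (M' : (F × Hm1) →L[ℂ] (F × H1)) : Prop :=
  ∀ x : F × Hm1,
    c.j1 ((M' x).2) = c.Gb (lam : ℂ) x - c.Gb z x ∧ (M' x).1 = c.A ((M' x).2)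

/-- The domain `𝔇 = {ψ ∈ 𝔉 : ψ - Gψ ∈ 𝔥₁}` (with `G = G_{λ∘}`). -/
def Dom (lam : ℝ) : Set F :=
  {ψ | ∃ φ : H1, ψ - c.G (lam : ℂ) ψ = c.j1 φ}

/-- The action of the block operator matrix `Θ_S = [[T_S, 1-G*],[1-G, -R]]` on the element
`ψ ⊕ φ` of its domain `𝔇⊕𝔉`; here `ψ0 ∈ 𝔥₁` is the lift of `(1-G)ψ`, so that
`T_Sψ = (1-G*)S(1-G)ψ = (1-G*)(Sψ0)`. -/
def ThetaS (lam : ℝ) (S : H1 →ₗ[ℂ] F) (ψ : F) (ψ0 : H1) (φ : F) : F × H1 :=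
  (S ψ0 - c.Gst lam (S ψ0) + φ - c.Gst lam φ, ψ0 - c.RF (lam : ℂ) φ)

/-- The action of `Θ_S + M_z` on `ψ ⊕ φ ∈ 𝔇⊕𝔉`. -/
def ThetaMS (lam : ℝ) (S : H1 →ₗ[ℂ] F) (z : ℂ) (ψ : F) (ψ0 : H1) (φ : F) : F × H1 :=
  c.ThetaS lam S ψ ψ0 φ + c.M lam z (ψ, c.jm φ)

/-- `Λ ∈ 𝔅(𝔉⊕𝔥₁, 𝔉⊕𝔥₋₁)` is the (two-sided) inverse of `Θ_S + M_z`. -/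
def IsInvTheta (lam : ℝ) (S : H1 →ₗ[ℂ] F) (z : ℂ)
    (Λ : (F × H1) →L[ℂ] (F × Hm1)) : Prop :=
  (∀ (ψ : F) (ψ0 : H1) (φ : F), c.j1 ψ0 = ψ - c.G (lam : ℂ) ψ →
    Λ (c.ThetaMS lam S z ψ ψ0 φ) = (ψ, c.jm φ)) ∧
  (∀ y : F × H1, ∃ (ψ : F) (ψ0 : H1) (φ : F),
    c.j1 ψ0 = ψ - c.G (lam : ℂ) ψ ∧ Λ y = (ψ, c.jm φ) ∧ c.ThetaMS lam S z ψ ψ0 φ = y)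

/-- `Z_S := {z ∈ ρ(H) : (Θ_S + M_z)⁻¹ ∈ 𝔅(𝔉⊕𝔥₁, 𝔉⊕𝔥₋₁)}`. -/
def ZS (lam : ℝ) (S : H1 →ₗ[ℂ] F) : Set ℂ :=
  {z | z ∈ c.res ∧ ∃ Λ : (F × H1) →L[ℂ] (F × Hm1), c.IsInvTheta lam S z Λ}

/-- `R̂_z = R_z + 𝔾_z Λ 𝔾_{z̄}* : 𝔉 → 𝔉`. -/
def Rhat (z : ℂ) (Λ : (F × H1) →L[ℂ] (F × Hm1)) : F →L[ℂ] F :=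
  c.j1.comp (c.RF z) + (c.Gb z).comp (Λ.comp (c.Gbstar z))

/-- The duality pairing `⟨⟨·,·⟩⟩_{-1,1}` between `𝔉⊕𝔥₋₁` and `𝔉⊕𝔥₁`. -/
def pairX (x : F × Hm1) (y : F × H1) : ℂ :=
  ⟪x.1, y.1⟫ + c.pair x.2 y.2

/-- Assumption (H3): `ran(G_z) ∩ 𝔥₁ = {0}` for all `z ∈ ρ(H)`. -/
def H3 : Prop :=
  ∀ z ∈ c.res, ∀ (ψ : F) (φ : H1), c.G z ψ = c.j1 φ → c.G z ψ = 0

/-- `S` is a symmetric operator (with domain containing `𝔥₁`). -/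
def IsSymmOp (S : H1 →ₗ[ℂ] F) : Prop :=
  ∀ ψ φ : H1, ⟪S ψ, c.j1 φ⟫ = ⟪c.j1 ψ, S φ⟫

/-- `S` is `H`-small with constants `a`, `b`. -/
def HSmall (S : H1 →ₗ[ℂ] F) (a b : ℝ) : Prop :=
  ∀ ψ : H1, ‖S ψ‖ ≤ a * ‖c.Hop ψ‖ + b * ‖c.j1 ψ‖

/-- `HSf ψ ψ0` realizes the action of `H_S = H̄ + A* + A_S` on `ψ ∈ 𝔇` (with `ψ0` the lift
of `(1-G)ψ`): `H_Sψ ∈ 𝔉` is characterized by `H_Sψ = H̄ψ + A*ψ + Aψ0 - T_Sψ` in `𝔥₋₁`. -/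
def IsHSAction (lam : ℝ) (S : H1 →ₗ[ℂ] F) (HSf : F → H1 → F) : Prop :=
  ∀ (ψ : F) (ψ0 : H1), c.j1 ψ0 = ψ - c.G (lam : ℂ) ψ →
    c.jm (HSf ψ ψ0) =
      c.Hbar ψ + c.Astar ψ + c.jm (c.A ψ0 - (S ψ0 - c.Gst lam (S ψ0)))

/-- `Rop = (-(H+W)+z)⁻¹`, the resolvent at `z` of the perturbation of `H` by the
`H`-bounded operator `W` (with domain `𝔥₁`). -/
def IsResolventOf (W : H1 →L[ℂ] F) (z : ℂ) (Rop : F →L[ℂ] F) : Prop :=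
  (∀ ψ : H1, Rop (z • c.j1 ψ - (c.Hop ψ + W ψ)) = c.j1 ψ) ∧
  (∀ χ : F, ∃ ψ : H1, Rop χ = c.j1 ψ ∧ z • c.j1 ψ - (c.Hop ψ + W ψ) = χ)

/-- `Rop = (-H_S+z)⁻¹`, the resolvent at `z` of the operator `H_S` with domain `𝔇` whose
action is realized by `HSf`. -/
def IsResolventOfD (lam : ℝ) (HSf : F → H1 → F) (z : ℂ) (Rop : F →L[ℂ] F) : Prop :=
  (∀ (ψ : F) (ψ0 : H1), c.j1 ψ0 = ψ - c.G (lam : ℂ) ψ →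
    Rop (z • ψ - HSf ψ ψ0) = ψ) ∧
  (∀ χ : F, ∃ (ψ : F) (ψ0 : H1),
    c.j1 ψ0 = ψ - c.G (lam : ℂ) ψ ∧ Rop χ = ψ ∧ z • ψ - HSf ψ ψ0 = χ)

/-- `ψ ∈ 𝔥_s` (for `0 ≤ s ≤ 1`), i.e. `ψ ∈ 𝔉` is the limit of a `‖·‖_s`-Cauchy sequence
of elements of `𝔥₁`. -/
def memHs (s : ℝ) (ψ : F) : Prop :=
  ∃ u : ℕ → H1, Filter.Tendsto (fun n => c.j1 (u n)) Filter.atTop (nhds ψ) ∧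
    ∀ ε > 0, ∃ N, ∀ m ≥ N, ∀ n ≥ N, c.ns s (u m - u n) < ε

/-- `T ∈ 𝔅(𝔥_s, 𝔉)` (with `T` given on `𝔥₁`): `T` is bounded for the `‖·‖_s`-norm. -/
def MemBs (s : ℝ) (T : H1 →L[ℂ] F) : Prop :=
  ∃ C : ℝ, 0 ≤ C ∧ ∀ ψ : H1, ‖T ψ‖ ≤ C * c.ns s ψ

/-- `T` (with domain containing `𝔥₁ ⊆ 𝔥_{1/2}`) is closable as an operator in `𝔉`. -/
def ClosableOp (T : H1 →L[ℂ] F) : Prop :=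
  ∀ (u : ℕ → H1) (χ : F),
    Filter.Tendsto (fun n => c.j1 (u n)) Filter.atTop (nhds 0) →
    Filter.Tendsto (fun n => T (u n)) Filter.atTop (nhds χ) → χ = 0

/-- `Tstar` is (the restriction to `𝔥₁` of) the adjoint of `T`. -/
def IsAdjointOn (T Tstar : H1 →L[ℂ] F) : Prop :=
  ∀ ψ φ : H1, ⟪Tstar ψ, c.j1 φ⟫ = ⟪c.j1 ψ, T φ⟫

/-- `G_{n,z} := (A_n R_{z̄})* ∈ 𝔅(𝔉)`. -/
def Gn (An : H1 →L[ℂ] F) (z : ℂ) : F →L[ℂ] F :=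
  ContinuousLinearMap.adjoint (An.comp (c.RF (starRingEnd ℂ z)))

/-- `B = A_n R A_n* ∈ 𝔅(𝔉)`: since `R A_n*ψ = G_{n,λ∘}ψ ∈ 𝔥₁`, the operator `B` is
`A_n` applied to the lift of `G_{n,λ∘}ψ`. -/
def IsAnRAn (lam : ℝ) (An : H1 →L[ℂ] F) (B : F →L[ℂ] F) : Prop :=
  ∀ ψ : F, ∃ φ : H1, c.j1 φ = c.Gn An (lam : ℂ) ψ ∧ B ψ = An φ

/-- `𝔾_{n,z}` as a bounded operator `𝔉⊕𝔉 → 𝔉`, `ψ⊕φ ↦ G_{n,z}ψ + R_zφ`. -/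
def Gnb (An : H1 →L[ℂ] F) (z : ℂ) : (F × F) →L[ℂ] F :=
  (c.Gn An z).comp (ContinuousLinearMap.fst ℂ F F) +
    (c.j1.comp (c.RF z)).comp (ContinuousLinearMap.snd ℂ F F)

/-- `𝔾_{n,z̄}* : 𝔉 → 𝔉⊕𝔉`, `ψ ↦ (A_n R_z ψ) ⊕ (R_z ψ)`. -/
def Gnbstar (An : H1 →L[ℂ] F) (z : ℂ) : F →L[ℂ] (F × F) :=
  (An.comp (c.RF z)).prod (c.j1.comp (c.RF z))

/-- `M_{n,z} = 𝔸_n(𝔾_n - 𝔾_{n,z}) = (z-λ∘)𝔾_n*𝔾_{n,z} : 𝔉⊕𝔉 → 𝔉⊕𝔥₁ ⊆ 𝔉⊕𝔉`. -/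
def Mn (lam : ℝ) (An : H1 →L[ℂ] F) (z : ℂ) : (F × F) →L[ℂ] (F × F) :=
  (z - (lam : ℂ)) • ((c.Gnbstar An (lam : ℂ)).comp (c.Gnb An z))

/-- `Θ_n = [[E_n - A_nRA_n*, 1-G_n*],[1-G_n, -R]] : 𝔉⊕𝔉 → 𝔉⊕𝔉`. -/
def Thetan (lam : ℝ) (An : H1 →L[ℂ] F) (En AnRAn : F →L[ℂ] F) :
    (F × F) →L[ℂ] (F × F) :=
  ((En - AnRAn).comp (ContinuousLinearMap.fst ℂ F F) +
      ((1 : F →L[ℂ] F) - An.comp (c.RF (lam : ℂ))).comp (ContinuousLinearMap.snd ℂ F F)).prod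
    (((1 : F →L[ℂ] F) - c.Gn An (lam : ℂ)).comp (ContinuousLinearMap.fst ℂ F F) -
      (c.j1.comp (c.RF (lam : ℂ))).comp (ContinuousLinearMap.snd ℂ F F))

end Ctx

/-!
Write `Λ_z = (Θ_S + M_z)⁻¹`. If `(Θ_S + M_z)(ψ ⊕ φ) = 𝔾_{z̄}* χ`, the second row of this
equation says `ψ - 𝔾_z(ψ ⊕ φ) = R_z χ`, i.e. `R̂_z χ = ψ` is the first component of
`Λ_z 𝔾_{z̄}* χ`. Since `M_z - M_w = (z - w) 𝔾_{z̄}* 𝔾_w`, the inverses satisfy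
`Λ_z - Λ_w = (w - z) Λ_z 𝔾_{z̄}* 𝔾_w Λ_w`, and combined with the resolvent identity for
`𝔾_{z̄}*` this is the resolvent identity for `R̂`. For the adjoint, `Θ_S + M_z` and
`Θ_S + M_{z̄}` are adjoint to each other for the duality pairing, because `S` is symmetric,
`R` is self-adjoint and `R 𝔾_z = R_z 𝔾`. Finally `M_{λ∘} = 0`, so `R̂_{λ∘} χ = 0` gives
`ψ = 0`, then `φ = -χ` from the second row and `χ = 0` from the first.
-/

theorem ContinuousLinearMap.resolvent_identity {𝕜 X Y : Type*} [NontriviallyNormedField 𝕜]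
    [NormedAddCommGroup X] [NormedSpace 𝕜 X] [NormedAddCommGroup Y] [NormedSpace 𝕜 Y]
    (j T : X →L[𝕜] Y) (Rz Rw : Y →L[𝕜] X) {z w : 𝕜}
    (hz : Rz ∘L (z • j - T) = .id 𝕜 X) (hw : (w • j - T) ∘L Rw = .id 𝕜 Y) :
    Rz - Rw = (w - z) • (Rz ∘L j ∘L Rw) :=
  calc Rz - Rw = Rz ∘L (w • j - T) ∘L Rw - (Rz ∘L (z • j - T)) ∘L Rw := by
        rw [hw, hz, comp_id, id_comp]
    _ = Rz ∘L ((w • j - T) - (z • j - T)) ∘L Rw := by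
        rw [sub_comp (w • j - T), comp_sub Rz ((w • j - T) ∘L Rw), comp_assoc]
    _ = (w - z) • (Rz ∘L j ∘L Rw) := by
        rw [sub_sub_sub_cancel_right, ← sub_smul, smul_comp, comp_smul]

namespace Ctx

variable (c : Ctx F H1 Hm1) {lam : ℝ} {z w : ℂ}

open ContinuousLinearMap

lemma conj_mem_res (hz : z ∈ c.res) : conj z ∈ c.res := by
  by_cases him : z.im = 0
  · rwa [Complex.conj_eq_iff_im.mpr him]
  · exact c.res_nonreal _ (by simpa using him)

lemma smul_j1_RF_sub_Hop_RF (hz : z ∈ c.res) (χ : F) :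
    z • c.j1 (c.RF z χ) - c.Hop (c.RF z χ) = χ := by
  simpa using DFunLike.congr_fun (c.RF_inv_right z hz) χ

lemma RF_injective (hz : z ∈ c.res) : Function.Injective (c.RF z) :=
  Function.LeftInverse.injective (g := z • c.j1 - c.Hop) fun χ => by
    simpa using c.smul_j1_RF_sub_Hop_RF hz χ

lemma RM_jm (hz : z ∈ c.res) (χ : F) : c.RM z (c.jm χ) = c.j1 (c.RF z χ) :=
  DFunLike.congr_fun (c.RM_ext z hz) χ

lemma RF_sub_RF (hz : z ∈ c.res) (hw : w ∈ c.res) :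
    c.RF z - c.RF w = (w - z) • (c.RF z ∘L c.j1 ∘L c.RF w) :=
  resolvent_identity _ _ _ _ (c.RF_inv_left z hz) (c.RF_inv_right w hw)

lemma RF_sub_RF' (hz : z ∈ c.res) (hw : w ∈ c.res) :
    c.RF z - c.RF w = (w - z) • (c.RF w ∘L c.j1 ∘L c.RF z) := by
  rw [← neg_sub, c.RF_sub_RF hw hz, ← neg_smul, neg_sub]

lemma RM_sub_RM (hz : z ∈ c.res) (hw : w ∈ c.res) :
    c.RM z - c.RM w = (w - z) • (c.j1 ∘L c.RF z ∘L c.RM w) := by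
  rw [resolvent_identity _ _ _ _ (c.RM_inv_left z hz) (c.RM_inv_right w hw), ← comp_assoc,
    c.RM_ext z hz, comp_assoc]

lemma inner_j1_RF_conj (hz : z ∈ c.res) (χ χ' : F) :
    ⟪c.j1 (c.RF (conj z) χ), χ'⟫ = ⟪χ, c.j1 (c.RF z χ')⟫ := by
  conv_lhs => rw [← c.smul_j1_RF_sub_Hop_RF hz χ']
  conv_rhs => rw [← c.smul_j1_RF_sub_Hop_RF (c.conj_mem_res hz) χ]
  simp only [inner_sub_right, inner_smul_right, inner_sub_left, inner_smul_left,
    Complex.conj_conj, c.Hsymm]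

lemma adjoint_j1_comp_RF (hz : z ∈ c.res) : adjoint (c.j1 ∘L c.RF z) = c.j1 ∘L c.RF (conj z) :=
  ((eq_adjoint_iff _ _).mpr (c.inner_j1_RF_conj hz)).symm

lemma inner_j1_RF_ofReal (hlam : (lam : ℂ) ∈ c.res) (χ χ' : F) :
    ⟪c.j1 (c.RF lam χ), χ'⟫ = ⟪χ, c.j1 (c.RF lam χ')⟫ := by
  simpa using c.inner_j1_RF_conj hlam χ χ'

lemma G_sub_G (hz : z ∈ c.res) (hw : w ∈ c.res) :
    c.G z - c.G w = (w - z) • (c.j1 ∘L c.RF z ∘L c.G w) := by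
  rw [G, G, ← map_sub, ← comp_sub, c.RF_sub_RF' (c.conj_mem_res hz) (c.conj_mem_res hw),
    comp_smul, map_smulₛₗ, ← comp_assoc, adjoint_comp, c.adjoint_j1_comp_RF (c.conj_mem_res hz)]
  simp [comp_assoc]

lemma Gb_apply (x : F × Hm1) : c.Gb z x = c.G z x.1 + c.RM z x.2 := rfl

lemma Gb_jm (hz : z ∈ c.res) (ψ φ : F) :
    c.Gb z (ψ, c.jm φ) = c.G z ψ + c.j1 (c.RF z φ) := by
  rw [Gb_apply, c.RM_jm hz]

lemma Gbstar_apply (v : F) : c.Gbstar z v = c.Ab (c.RF z v) := rfl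

lemma Gb_sub_Gb (hz : z ∈ c.res) (hw : w ∈ c.res) (x : F × Hm1) :
    c.Gb z x - c.Gb w x = (w - z) • c.j1 (c.RF z (c.Gb w x)) := by
  have hG := DFunLike.congr_fun (c.G_sub_G hz hw) x.1
  have hRM := DFunLike.congr_fun (c.RM_sub_RM hz hw) x.2
  simp only [sub_apply, smul_apply, comp_apply] at hG hRM
  rw [Gb_apply, Gb_apply, add_sub_add_comm, hG, hRM, ← smul_add, ← map_add, ← map_add]

lemma Gbstar_sub_Gbstar (hz : z ∈ c.res) (hw : w ∈ c.res) (v : F) :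
    c.Gbstar z v - c.Gbstar w v = (w - z) • c.Gbstar z (c.j1 (c.RF w v)) := by
  have h := DFunLike.congr_fun (c.RF_sub_RF hz hw) v
  simp only [sub_apply, smul_apply, comp_apply] at h
  rw [Gbstar_apply, Gbstar_apply, ← map_sub, h, map_smul, Gbstar_apply]

lemma RF_Gb_comm (hz : z ∈ c.res) (hw : w ∈ c.res) (x : F × Hm1) :
    c.RF w (c.Gb z x) = c.RF z (c.Gb w x) := by
  rcases eq_or_ne z w with rfl | hne
  · rfl
  -- multiplied by `w - z`, both sides become `𝔾_z x - 𝔾_w x`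
  apply c.j1_inj
  apply smul_right_injective F (sub_ne_zero.mpr hne.symm)
  linear_combination (norm := module) c.Gb_sub_Gb hz hw x + c.Gb_sub_Gb hw hz x

lemma M_sub_M (hlam : (lam : ℂ) ∈ c.res) (hz : z ∈ c.res) (hw : w ∈ c.res) (x : F × Hm1) :
    c.M lam z x - c.M lam w x = (z - w) • c.Gbstar z (c.Gb w x) := by
  have hGb : c.Gb z x = c.Gb w x + (w - z) • c.j1 (c.RF z (c.Gb w x)) := by
    rw [← c.Gb_sub_Gb hz hw x, add_sub_cancel]
  have hGbstar := c.Gbstar_sub_Gbstar hlam hz (c.Gb w x)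
  simp only [M, smul_apply, comp_apply, hGb, map_add, map_smul]
  linear_combination (norm := module) (z - w) • hGbstar

lemma j1_ThetaMS_snd (hlam : (lam : ℂ) ∈ c.res) (hz : z ∈ c.res) (S : H1 →ₗ[ℂ] F)
    {ψ φ : F} {ψ0 : H1} (hlift : c.j1 ψ0 = ψ - c.G lam ψ) :
    c.j1 (c.ThetaMS lam S z ψ ψ0 φ).2 = ψ - c.Gb z (ψ, c.jm φ) := by
  have hGb := c.Gb_sub_Gb hlam hz (ψ, c.jm φ)
  rw [c.Gb_jm hlam] at hGb
  simp only [ThetaMS, ThetaS, M, Prod.snd_add, smul_apply, comp_apply, Gbstar_apply, Ab,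
    prod_apply, id_apply, Prod.smul_snd, map_add, map_sub, map_smul]
  linear_combination (norm := module) hlift - hGb

lemma Rhat_apply (Λ : (F × H1) →L[ℂ] (F × Hm1)) (χ : F) :
    c.Rhat z Λ χ = c.j1 (c.RF z χ) + c.Gb z (Λ (c.Gbstar z χ)) := rfl

variable {c}

lemma IsInvTheta.exists_Rhat_apply_eq {S : H1 →ₗ[ℂ] F} {Λ : (F × H1) →L[ℂ] (F × Hm1)}
    (hΛ : c.IsInvTheta lam S z Λ) (hlam : (lam : ℂ) ∈ c.res) (hz : z ∈ c.res) (χ : F) :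
    ∃ ψ ψ0 φ, c.j1 ψ0 = ψ - c.G lam ψ ∧ Λ (c.Gbstar z χ) = (ψ, c.jm φ) ∧
      c.ThetaMS lam S z ψ ψ0 φ = c.Gbstar z χ ∧ c.Rhat z Λ χ = ψ := by
  obtain ⟨ψ, ψ0, φ, hlift, hΛχ, hθ⟩ := hΛ.2 (c.Gbstar z χ)
  refine ⟨ψ, ψ0, φ, hlift, hΛχ, hθ, ?_⟩
  have hsnd := congrArg (c.j1 ∘ Prod.snd) hθ
  simp only [Function.comp_apply, c.j1_ThetaMS_snd hlam hz S hlift, Gbstar_apply, Ab,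
    prod_apply, id_apply] at hsnd
  rw [Rhat_apply, hΛχ, ← hsnd, sub_add_cancel]

lemma IsInvTheta.Rhat_apply_eq_fst {S : H1 →ₗ[ℂ] F} {Λ : (F × H1) →L[ℂ] (F × Hm1)}
    (hΛ : c.IsInvTheta lam S z Λ) (hlam : (lam : ℂ) ∈ c.res) (hz : z ∈ c.res) (χ : F) :
    c.Rhat z Λ χ = (Λ (c.Gbstar z χ)).1 := by
  obtain ⟨ψ, _, φ, -, hΛχ, -, hR⟩ := hΛ.exists_Rhat_apply_eq hlam hz χ
  rw [hR, hΛχ]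

lemma IsInvTheta.apply_sub_apply {S : H1 →ₗ[ℂ] F} {Λz Λw : (F × H1) →L[ℂ] (F × Hm1)}
    (hΛz : c.IsInvTheta lam S z Λz) (hΛw : c.IsInvTheta lam S w Λw)
    (hlam : (lam : ℂ) ∈ c.res) (hz : z ∈ c.res) (hw : w ∈ c.res) (y : F × H1) :
    Λz y - Λw y = (w - z) • Λz (c.Gbstar z (c.Gb w (Λw y))) := by
  obtain ⟨ψ, ψ0, φ, hlift, hΛy, hθ⟩ := hΛw.2 y
  have hθz : c.ThetaMS lam S z ψ ψ0 φ = y + (z - w) • c.Gbstar z (c.Gb w (ψ, c.jm φ)) := by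
    rw [← c.M_sub_M hlam hz hw, ← hθ, ThetaMS, ThetaMS]
    abel
  have hinv := hΛz.1 ψ ψ0 φ hlift
  rw [hθz, map_add, map_smul, ← hΛy] at hinv
  linear_combination (norm := module) hinv

lemma IsInvTheta.Rhat_sub_Rhat {S : H1 →ₗ[ℂ] F} {Λz Λw : (F × H1) →L[ℂ] (F × Hm1)}
    (hΛz : c.IsInvTheta lam S z Λz) (hΛw : c.IsInvTheta lam S w Λw)
    (hlam : (lam : ℂ) ∈ c.res) (hz : z ∈ c.res) (hw : w ∈ c.res) :
    c.Rhat z Λz - c.Rhat w Λw = (w - z) • (c.Rhat z Λz ∘L c.Rhat w Λw) := by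
  ext χ
  have hΛ : Λz (c.Gbstar z χ) - Λw (c.Gbstar w χ)
      = (w - z) • Λz (c.Gbstar z (c.Rhat w Λw χ)) := by
    have hGbstar := congrArg Λz (c.Gbstar_sub_Gbstar hz hw χ)
    rw [map_sub, map_smul] at hGbstar
    rw [Rhat_apply, map_add, map_add, smul_add]
    linear_combination (norm := module) hGbstar + hΛz.apply_sub_apply hΛw hlam hz hw _
  calc (c.Rhat z Λz - c.Rhat w Λw) χ = (Λz (c.Gbstar z χ) - Λw (c.Gbstar w χ)).1 := by
        rw [sub_apply, Prod.fst_sub, hΛz.Rhat_apply_eq_fst hlam hz, hΛw.Rhat_apply_eq_fst hlam hw]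
    _ = ((w - z) • (c.Rhat z Λz ∘L c.Rhat w Λw)) χ := by
        rw [hΛ, Prod.smul_fst, smul_apply, comp_apply, hΛz.Rhat_apply_eq_fst hlam hz]

variable (c)

lemma pairX_add_right (x : F × Hm1) (y y' : F × H1) :
    c.pairX x (y + y') = c.pairX x y + c.pairX x y' := by
  simp only [pairX, Prod.fst_add, Prod.snd_add, inner_add_right, c.pair_addr]
  ring

lemma pairX_smul_right (x : F × Hm1) (a : ℂ) (y : F × H1) :
    c.pairX x (a • y) = a * c.pairX x y := by
  simp only [pairX, Prod.smul_fst, Prod.smul_snd, inner_smul_right, c.pair_smulr]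
  ring

lemma pairX_jm (ψ φ : F) (y : F × H1) :
    c.pairX (ψ, c.jm φ) y = ⟪ψ, y.1⟫ + ⟪φ, c.j1 y.2⟫ := by
  rw [pairX, c.pair_jm]

lemma pairX_Gbstar (hz : z ∈ c.res) (ψ φ v : F) :
    c.pairX (ψ, c.jm φ) (c.Gbstar z v) = ⟪c.Gb (conj z) (ψ, c.jm φ), v⟫ := by
  rw [pairX_jm, c.Gb_jm (c.conj_mem_res hz), inner_add_left, G, adjoint_inner_left,
    c.inner_j1_RF_conj hz, Complex.conj_conj]
  rfl

lemma pairX_M_symm (hlam : (lam : ℂ) ∈ c.res) (hz : z ∈ c.res) (ψ φ ψ' φ' : F) :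
    c.pairX (ψ, c.jm φ) (c.M lam z (ψ', c.jm φ'))
      = conj (c.pairX (ψ', c.jm φ') (c.M lam (conj z) (ψ, c.jm φ))) := by
  have hcomm : c.Gbstar lam (c.Gb z (ψ', c.jm φ')) = c.Gbstar z (c.Gb lam (ψ', c.jm φ')) := by
    rw [Gbstar_apply, Gbstar_apply, c.RF_Gb_comm hz hlam]
  simp only [M, smul_apply, comp_apply, pairX_smul_right, map_mul, hcomm,
    c.pairX_Gbstar hz, c.pairX_Gbstar hlam, Complex.conj_ofReal, map_sub, Complex.conj_conj,
    inner_conj_symm]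

lemma pairX_ThetaS (S : H1 →ₗ[ℂ] F) {ψ φ : F} {ψ0 : H1} (hlift : c.j1 ψ0 = ψ - c.G lam ψ)
    (ψ' φ' : F) (ψ0' : H1) :
    c.pairX (ψ, c.jm φ) (c.ThetaS lam S ψ' ψ0' φ')
      = ⟪c.j1 ψ0, S ψ0'⟫ + ⟪c.j1 ψ0, φ'⟫ + ⟪φ, c.j1 ψ0'⟫ - ⟪φ, c.j1 (c.RF lam φ')⟫ := by
  simp only [pairX_jm, ThetaS, map_sub, inner_add_right, inner_sub_right, Gst,
    adjoint_inner_right, hlift, inner_sub_left]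
  ring

lemma pairX_ThetaMS_symm (hlam : (lam : ℂ) ∈ c.res) (hz : z ∈ c.res) {S : H1 →ₗ[ℂ] F}
    (hS : c.IsSymmOp S) {ψ ψ' : F} {ψ0 ψ0' : H1}
    (hlift : c.j1 ψ0 = ψ - c.G lam ψ) (hlift' : c.j1 ψ0' = ψ' - c.G lam ψ') (φ φ' : F) :
    c.pairX (ψ, c.jm φ) (c.ThetaMS lam S z ψ' ψ0' φ')
      = conj (c.pairX (ψ', c.jm φ') (c.ThetaMS lam S (conj z) ψ ψ0 φ)) := by
  rw [ThetaMS, ThetaMS, pairX_add_right, pairX_add_right, map_add, c.pairX_M_symm hlam hz,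
    c.pairX_ThetaS S hlift, c.pairX_ThetaS S hlift']
  simp only [map_add, map_sub, inner_conj_symm, hS ψ0 ψ0', c.inner_j1_RF_ofReal hlam φ]
  ring

variable {c}

lemma IsInvTheta.inner_Rhat_conj {S : H1 →ₗ[ℂ] F} (hS : c.IsSymmOp S)
    {Λz Λzc : (F × H1) →L[ℂ] (F × Hm1)}
    (hΛz : c.IsInvTheta lam S z Λz) (hΛzc : c.IsInvTheta lam S (conj z) Λzc)
    (hlam : (lam : ℂ) ∈ c.res) (hz : z ∈ c.res) (χ χ' : F) :
    ⟪c.Rhat (conj z) Λzc χ, χ'⟫ = ⟪χ, c.Rhat z Λz χ'⟫ := by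
  have hzc := c.conj_mem_res hz
  obtain ⟨ψ, ψ0, φ, hlift, hΛχ, hθ, -⟩ := hΛzc.exists_Rhat_apply_eq hlam hzc χ
  obtain ⟨ψ', ψ0', φ', hlift', hΛχ', hθ', -⟩ := hΛz.exists_Rhat_apply_eq hlam hz χ'
  have hsymm := c.pairX_ThetaMS_symm hlam hz hS hlift hlift' φ φ'
  rw [hθ, hθ', c.pairX_Gbstar hz, c.pairX_Gbstar hzc, Complex.conj_conj, inner_conj_symm]
    at hsymm
  rw [Rhat_apply, Rhat_apply, hΛχ, hΛχ', inner_add_left, inner_add_right, hsymm,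
    c.inner_j1_RF_conj hz]

lemma IsInvTheta.adjoint_Rhat {S : H1 →ₗ[ℂ] F} (hS : c.IsSymmOp S)
    {Λz Λzc : (F × H1) →L[ℂ] (F × Hm1)}
    (hΛz : c.IsInvTheta lam S z Λz) (hΛzc : c.IsInvTheta lam S (conj z) Λzc)
    (hlam : (lam : ℂ) ∈ c.res) (hz : z ∈ c.res) :
    adjoint (c.Rhat z Λz) = c.Rhat (conj z) Λzc :=
  ((eq_adjoint_iff _ _).mpr (hΛz.inner_Rhat_conj hS hΛzc hlam hz)).symm

lemma Gst_ofReal : c.Gst lam = c.A ∘L c.RF lam := by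
  rw [Gst, G, Complex.conj_ofReal, adjoint_adjoint]

lemma IsInvTheta.eq_zero_of_Rhat_apply_eq_zero {S : H1 →ₗ[ℂ] F}
    {Λ : (F × H1) →L[ℂ] (F × Hm1)} (hΛ : c.IsInvTheta lam S lam Λ)
    (hlam : (lam : ℂ) ∈ c.res) {χ : F} (hχ : c.Rhat lam Λ χ = 0) : χ = 0 := by
  obtain ⟨ψ, ψ0, φ, hlift, -, hθ, hR⟩ := hΛ.exists_Rhat_apply_eq hlam hlam χ
  obtain rfl : ψ = 0 := hR.symm.trans hχ
  obtain rfl : ψ0 = 0 := c.j1_inj (by simpa using hlift)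
  simp only [ThetaMS, ThetaS, M, sub_self, zero_smul, zero_apply, add_zero, map_zero, zero_sub,
    zero_add, Gbstar_apply, Ab, prod_apply, id_apply, Prod.ext_iff] at hθ
  obtain ⟨hfst, hsnd⟩ := hθ
  have hφ : φ = -χ := c.RF_injective hlam (by rw [map_neg, ← hsnd, neg_neg])
  rw [hφ, Gst_ofReal, map_neg, comp_apply, sub_neg_eq_add, neg_add_eq_iff_eq_add] at hfst
  exact add_eq_right.mp hfst.symm

end Ctx

theorem statement8_general (c : Ctx F H1 Hm1) (lam : ℝ) (hlam : lam < c.lamInf)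
    (S : H1 →ₗ[ℂ] F) (hS : c.IsSymmOp S)
    (Λlam : (F × H1) →L[ℂ] (F × Hm1)) (hΛlam : c.IsInvTheta lam S (lam : ℂ) Λlam)
    (z : ℂ) (hz : z ∈ c.ZS lam S) (Λz : (F × H1) →L[ℂ] (F × Hm1))
    (hΛz : c.IsInvTheta lam S z Λz)
    (w : ℂ) (hw : w ∈ c.ZS lam S) (Λw : (F × H1) →L[ℂ] (F × Hm1))
    (hΛw : c.IsInvTheta lam S w Λw)
    (Λzc : (F × H1) →L[ℂ] (F × Hm1)) (hΛzc : c.IsInvTheta lam S (starRingEnd ℂ z) Λzc) :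
    c.Rhat z Λz - c.Rhat w Λw = (w - z) • ((c.Rhat z Λz).comp (c.Rhat w Λw)) ∧
    ContinuousLinearMap.adjoint (c.Rhat z Λz) = c.Rhat (starRingEnd ℂ z) Λzc ∧
    (∀ ψ : F, c.Rhat (lam : ℂ) Λlam ψ = 0 → ψ = 0) := by
  have hlam_res : (lam : ℂ) ∈ c.res := c.res_below lam hlam
  exact ⟨hΛz.Rhat_sub_Rhat hΛw hlam_res hz.1 hw.1, hΛz.adjoint_Rhat hS hΛzc hlam_res hz.1,
    fun _ => hΛlam.eq_zero_of_Rhat_apply_eq_zero hlam_res⟩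

/-- Assume (H3) and `λ∘ ∈ Z_S`; for `z ∈ Z_S` set
`R̂_z := R_z + 𝔾_z(Θ_S+M_z)⁻¹𝔾_{z̄}*`.  Then `R̂` is a pseudo-resolvent:
`R̂_z - R̂_w = (w-z)R̂_zR̂_w`; moreover `R̂_z* = R̂_{z̄}` and `ker(R̂_{λ∘}) = {0}`. -/
theorem statement8 (c : Ctx F H1 Hm1) (lam : ℝ) (hlam : lam < c.lamInf)
    (hH3 : c.H3) (S : H1 →ₗ[ℂ] F) (hS : c.IsSymmOp S)
    (Λlam : (F × H1) →L[ℂ] (F × Hm1)) (hΛlam : c.IsInvTheta lam S (lam : ℂ) Λlam)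
    (z : ℂ) (hz : z ∈ c.ZS lam S) (Λz : (F × H1) →L[ℂ] (F × Hm1))
    (hΛz : c.IsInvTheta lam S z Λz)
    (w : ℂ) (hw : w ∈ c.ZS lam S) (Λw : (F × H1) →L[ℂ] (F × Hm1))
    (hΛw : c.IsInvTheta lam S w Λw)
    (Λzc : (F × H1) →L[ℂ] (F × Hm1)) (hΛzc : c.IsInvTheta lam S (starRingEnd ℂ z) Λzc) :
    c.Rhat z Λz - c.Rhat w Λw = (w - z) • ((c.Rhat z Λz).comp (c.Rhat w Λw)) ∧
    ContinuousLinearMap.adjoint (c.Rhat z Λz) = c.Rhat (starRingEnd ℂ z) Λzc ∧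
    (∀ ψ : F, c.Rhat (lam : ℂ) Λlam ψ = 0 → ψ = 0) :=
  statement8_general c lam hlam S hS Λlam hΛlam z hz Λz hΛz w hw Λw hΛw Λzc hΛzc
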